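/- arXiv:1712.08954 — 2 statements merged into one kernel-verified Lean document; each statement's English description precedes it below -/
import Mathlib

section
/- In a game factorable for player i, if i's payoff is not independent of information set h*, then for any strategy profile, either h* is on the path of play, or player i has a deviation at a single one of her information sets that puts h* onto the path of play. -/
/-!
Payoff dependence on `h*` together with factorability places `h*` in `F_i[s_i]` for the strategy
`s_i` that `i` plays in a profile witnessing the dependence. Then `h*` is reached whenever `i`
plays `s_i`: if it were not, its action could be changed without changing `i`'s payoff, which
factorability forbids. Given any profile `a`, let `b` be `a` with `i`'s actions replaced by `s_i`,
so `b` reaches `h*`. Since `i` moves at most once along `b`'s path, changing `a` at that single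
information set of `i` (if there is one) gives a profile agreeing with `b` along `b`'s path. Such a
profile has the same path as `b`: it differs from `b` only at sets off that path, and changing the
action at an unreached set does not move the path.
-/

open scoped Classical

noncomputable section

variable {ι H : Type} [Fintype ι] [DecidableEq ι] [Fintype H] [DecidableEq H]

/-- Combine a strategy of player `i` (actions at `i`'s information sets) with a profile
of the opponents' actions into a full action profile. -/
def combine (owner : H → ι) (A : H → Type) (i : ι)
    (si : ∀ h : {h // owner h = i}, A h) (so : ∀ h : {h // owner h ≠ i}, A h) :
    ∀ h, A h :=
  fun h => if hh : owner h = i then si ⟨h, hh⟩ else so ⟨h, hh⟩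

/-- Player `i`'s payoff is independent of the information set `hstar`. -/
def PayoffIndep {A : H → Type} (payoff : ι → (∀ h, A h) → ℝ) (i : ι) (hstar : H) : Prop :=
  ∀ (a : ∀ h, A h) (x x' : A hstar),
    payoff i (Function.update a hstar x) = payoff i (Function.update a hstar x')

section

open Function

variable {ι H : Type} [DecidableEq H] {A : H → Type} {onPath : (∀ h, A h) → H → Prop}

theorem onPath_iff_of_eqOn_path [Finite H]
    (hoffPath : ∀ (a : ∀ h, A h) (h : H) (x : A h), ¬ onPath a h →
      ∀ h', onPath (update a h x) h' ↔ onPath a h')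
    {a b : ∀ h, A h} (hab : ∀ h, onPath b h → a h = b h) (h' : H) :
    onPath a h' ↔ onPath b h' := by
  have := Fintype.ofFinite H
  suffices key : ∀ s : Finset H, ∀ a : ∀ h, A h, (∀ h ∉ s, a h = b h) →
      (∀ h, onPath b h → a h = b h) → ∀ h', (onPath a h' ↔ onPath b h') from
    key Finset.univ a (by simp) hab h'
  intro s
  induction s using Finset.induction_on with
  | empty =>
    intro a ha _ h'
    rw [funext fun h => ha h (Finset.notMem_empty h)]
  | insert t s hts ih =>
    intro a ha hab h'
    have eq_of_ne {h} (he : h ≠ t) : update a t (b t) h = a h := update_of_ne he _ _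
    have hpath := ih (update a t (b t))
      (fun h hh => if he : h = t then he ▸ update_self .. else
        (eq_of_ne he).trans (ha h (by simp [he, hh])))
      (fun h hp => if he : h = t then he ▸ update_self .. else (eq_of_ne he).trans (hab h hp))
    by_cases ht : onPath b t
    · rw [← hab t ht, update_eq_self] at hpath
      exact hpath h'
    · calc onPath a h' ↔ onPath (update (update a t (b t)) t (a t)) h' := by simp
        _ ↔ onPath (update a t (b t)) h' := hoffPath _ t _ ((hpath t).not.mpr ht) h'
        _ ↔ onPath b h' := hpath h'

theorem onPath_update_iff_of_eqOn_opponents [Finite H] {owner : H → ι} {i : ι}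
    (hoffPath : ∀ (a : ∀ h, A h) (h : H) (x : A h), ¬ onPath a h →
      ∀ h', onPath (update a h x) h' ↔ onPath a h')
    {a b : ∀ h, A h} (hab : ∀ h, owner h ≠ i → a h = b h) {h₀ : H}
    (huniq : ∀ h, onPath b h → owner h = i → h = h₀) (h' : H) :
    onPath (update a h₀ (b h₀)) h' ↔ onPath b h' := by
  refine onPath_iff_of_eqOn_path hoffPath (fun h hp => ?_) h'
  by_cases he : h = h₀
  · subst he
    simp
  · rw [update_of_ne he]
    exact hab h fun hh => he (huniq h hp hh)

end

section

open Function

variable {ι H : Type} [DecidableEq ι] {owner : H → ι} {A : H → Type} {i : ι}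

theorem combine_apply_of_ne (si : ∀ h : {h // owner h = i}, A h)
    (so : ∀ h : {h // owner h ≠ i}, A h) {h : H} (hh : owner h ≠ i) :
    combine owner A i si so h = so ⟨h, hh⟩ :=
  dif_neg hh

theorem combine_restrict (a : ∀ h, A h) :
    combine owner A i (fun h => a h.1) (fun h => a h.1) = a := by
  funext h
  by_cases hh : owner h = i <;> simp [combine, hh]

theorem combine_update_of_ne [DecidableEq H] (si : ∀ h : {h // owner h = i}, A h)
    (so : ∀ h : {h // owner h ≠ i}, A h) {h₀ : H} (hne : owner h₀ ≠ i) (x : A h₀) :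
    combine owner A i si (update so ⟨h₀, hne⟩ x) = update (combine owner A i si so) h₀ x := by
  funext h
  by_cases hh : owner h = i
  · have hne' : h ≠ h₀ := by rintro rfl; exact hne hh
    simp [combine, hh, update_of_ne hne']
  · by_cases he : h = h₀
    · subst he
      simp [combine, hh]
    · have hsub : (⟨h, hh⟩ : {h // owner h ≠ i}) ≠ ⟨h₀, hne⟩ := by simp [he]
      simp [combine, hh, update_of_ne he, update_of_ne hsub]

def IsFactorization (owner : H → ι) (A : H → Type) (payoff : ι → (∀ h, A h) → ℝ) (i : ι)
    (F : (∀ h : {h // owner h = i}, A h) → Finset H) : Prop :=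
  ∀ si (so so' : ∀ h : {h // owner h ≠ i}, A h),
    payoff i (combine owner A i si so) = payoff i (combine owner A i si so') ↔
      ∀ (h : H), h ∈ F si → ∀ (hne : owner h ≠ i), so ⟨h, hne⟩ = so' ⟨h, hne⟩

variable [DecidableEq H] {payoff : ι → (∀ h, A h) → ℝ}
  {F : (∀ h : {h // owner h = i}, A h) → Finset H} {hstar : H}

theorem exists_mem_of_not_payoffIndep (hF : IsFactorization owner A payoff i F)
    (hown : owner hstar ≠ i) (hdep : ¬ PayoffIndep payoff i hstar) :
    ∃ si, hstar ∈ F si := by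
  simp only [PayoffIndep, not_forall] at hdep
  obtain ⟨a, x, x', hne⟩ := hdep
  refine ⟨fun h => a h.1, by_contra fun hnot => hne ?_⟩
  rw [← combine_restrict (owner := owner) (i := i) a, ← combine_update_of_ne _ _ hown,
    ← combine_update_of_ne _ _ hown]
  refine (hF _ _ _).mpr fun h hh hne => ?_
  have hsub : (⟨h, hne⟩ : {h // owner h ≠ i}) ≠ ⟨hstar, hown⟩ := by
    rintro ⟨⟩
    exact hnot hh
  simp only [update_of_ne hsub]

theorem onPath_combine_of_mem {onPath : (∀ h, A h) → H → Prop} [Nontrivial (A hstar)]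
    (hoffPay : ∀ (a : ∀ h, A h) (h : H) (x : A h), ¬ onPath a h →
      payoff i (update a h x) = payoff i a)
    (hF : IsFactorization owner A payoff i F) (hown : owner hstar ≠ i)
    {si : ∀ h : {h // owner h = i}, A h} (hmem : hstar ∈ F si)
    (so : ∀ h : {h // owner h ≠ i}, A h) :
    onPath (combine owner A i si so) hstar := by
  by_contra hoff
  obtain ⟨y, hy⟩ := exists_ne (so ⟨hstar, hown⟩)
  have hpay : payoff i (combine owner A i si (update so ⟨hstar, hown⟩ y)) =
      payoff i (combine owner A i si so) := by
    rw [combine_update_of_ne]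
    exact hoffPay _ _ _ hoff
  exact hy (by simpa using (hF si _ _).mp hpay hstar hmem hown)

end

theorem one_step_deviation_reaches_general
    (owner : H → ι) (A : H → Type)
    (onPath : (∀ h, A h) → H → Prop) (payoff : ι → (∀ h, A h) → ℝ)
    (hoffPay : ∀ (a : ∀ h, A h) (h : H) (x : A h), ¬ onPath a h →
      ∀ i', payoff i' (Function.update a h x) = payoff i' a)
    (hoffPath : ∀ (a : ∀ h, A h) (h : H) (x : A h), ¬ onPath a h →
      ∀ h', onPath (Function.update a h x) h' ↔ onPath a h')
    (honce : ∀ (a : ∀ h, A h) (h h' : H), onPath a h → onPath a h' →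
      owner h = owner h' → h = h')
    (i : ι)
    -- the game is factorable for i, with s_i-relevant information sets F s_i
    (F : (∀ h : {h // owner h = i}, A h) → Finset H)
    (hFmeas : ∀ si (so so' : ∀ h : {h // owner h ≠ i}, A h),
      payoff i (combine owner A i si so) = payoff i (combine owner A i si so') ↔
        ∀ (h : H), h ∈ F si → ∀ (hne : owner h ≠ i), so ⟨h, hne⟩ = so' ⟨h, hne⟩)
    -- h* is an information set of another player, and i's payoff depends on it
    (hstar : H) (hown : owner hstar ≠ i)
    (hdep : ¬ PayoffIndep payoff i hstar) :
    ∀ a : ∀ h, A h, onPath a hstar ∨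
      ∃ (h : H) (x : A h), owner h = i ∧ onPath (Function.update a h x) hstar := by
  intro a
  have hF : IsFactorization owner A payoff i F := hFmeas
  obtain ⟨si, hsi⟩ := exists_mem_of_not_payoffIndep hF hown hdep
  have : Nontrivial (A hstar) := not_subsingleton_iff_nontrivial.mp fun _ =>
    hdep fun _ x x' => by rw [Subsingleton.elim x x']
  set b := combine owner A i si (fun h => a h.1)
  have hb : onPath b hstar :=
    onPath_combine_of_mem (fun a h x hn => hoffPay a h x hn i) hF hown hsi _
  have hab : ∀ h, owner h ≠ i → a h = b h :=
    fun h hh => (combine_apply_of_ne si (fun h => a h.1) hh).symm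
  by_cases hi : ∃ h₀, owner h₀ = i ∧ onPath b h₀
  · obtain ⟨h₀, hh₀, hp₀⟩ := hi
    have huniq : ∀ h, onPath b h → owner h = i → h = h₀ :=
      fun h hp hh => honce b h h₀ hp hp₀ (hh.trans hh₀.symm)
    exact .inr ⟨h₀, b h₀, hh₀,
      (onPath_update_iff_of_eqOn_opponents hoffPath hab huniq hstar).mpr hb⟩
  · simp only [not_exists, not_and] at hi
    exact .inl ((onPath_iff_of_eqOn_path hoffPath (fun h hp => hab h fun hh => hi h hh hp)
      hstar).mpr hb)

/-- Proposition: in a game factorable for `i`, if `i`'s payoff is not independent of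
`h*`, then for any strategy profile either `h*` is on the path of play, or `i` has a
deviation at a single one of her information sets that puts `h*` onto the path. -/
theorem one_step_deviation_reaches
    (owner : H → ι) (A : H → Type) [∀ h, Fintype (A h)] [∀ h, Nonempty (A h)]
    (onPath : (∀ h, A h) → H → Prop) (payoff : ι → (∀ h, A h) → ℝ)
    (hoffPay : ∀ (a : ∀ h, A h) (h : H) (x : A h), ¬ onPath a h →
      ∀ i', payoff i' (Function.update a h x) = payoff i' a)
    (hoffPath : ∀ (a : ∀ h, A h) (h : H) (x : A h), ¬ onPath a h →
      ∀ h', onPath (Function.update a h x) h' ↔ onPath a h')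
    (honce : ∀ (a : ∀ h, A h) (h h' : H), onPath a h → onPath a h' →
      owner h = owner h' → h = h')
    (i : ι)
    -- the game is factorable for i, with s_i-relevant information sets F s_i
    (F : (∀ h : {h // owner h = i}, A h) → Finset H)
    (hFowner : ∀ si h, h ∈ F si → owner h ≠ i)
    (hFmeas : ∀ si (so so' : ∀ h : {h // owner h ≠ i}, A h),
      payoff i (combine owner A i si so) = payoff i (combine owner A i si so') ↔
        ∀ (h : H), h ∈ F si → ∀ (hne : owner h ≠ i), so ⟨h, hne⟩ = so' ⟨h, hne⟩)
    (hFdisj : ∀ si si', si ≠ si' → Disjoint (F si) (F si'))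
    -- h* is an information set of another player, and i's payoff depends on it
    (hstar : H) (hown : owner hstar ≠ i)
    (hdep : ¬ PayoffIndep payoff i hstar) :
    ∀ a : ∀ h, A h, onPath a hstar ∨
      ∃ (h : H) (x : A h), owner h = i ∧ onPath (Function.update a h x) hstar :=
  one_step_deviation_reaches_general owner A onPath payoff hoffPay hoffPath honce i F hFmeas hstar
    hown hdep

end
end

section
/- Suppose index policy r_i is more compatible with s_i* than index policy r_j is with s_j* (with φ(s_i*) = s_j* under isomorphic factoring). Then for any survival probability 0 ≤ γ < 1 and any mixed strategy profile σ, the induced response frequencies satisfy φ_i(s_i*; r_i, σ_{-i}) ≥ φ_j(s_j*; r_j, σ_{-j}). -/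
open scoped Classical

noncomputable section

variable {ι H : Type} [Fintype ι] [DecidableEq ι] [Fintype H] [DecidableEq H]

section LearnDefs

variable (A : H → Type) [∀ h, Fintype (A h)] [∀ h, DecidableEq (A h)]

/-- The observation from one play of strategy `s`: the profile of opponents' actions at
the `s`-relevant information sets `F s`. -/
abbrev ObsG {T : Type} (F : T → Finset H) (s : T) : Type := ∀ h : {h // h ∈ F s}, A h.1

/-- A finite personal history: a list of (own strategy, observation) pairs,
most recent first. -/
abbrev HistG {T : Type} (F : T → Finset H) : Type := List (Σ s : T, ObsG A F s)

/-- The subhistory of the periods in which strategy `s` was played. -/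
def subH {T : Type} [DecidableEq T] (F : T → Finset H) (y : HistG A F) (s : T) :
    List (ObsG A F s) :=
  y.filterMap fun e => if h : e.1 = s then some (h ▸ e.2) else none

/-- `r` is an index policy for the indices `idx`: after every history it plays a
strategy whose index, computed from that strategy's subhistory, is weakly highest. -/
def IsIndexPolicy {T : Type} [DecidableEq T] (F : T → Finset H)
    (idx : ∀ s : T, List (ObsG A F s) → ℝ) (r : HistG A F → T) : Prop :=
  ∀ (y : HistG A F) (s' : T), idx s' (subH A F y s') ≤ idx (r y) (subH A F y (r y))

/-- Third-party equivalence of subhistories: same length, and the same sequence of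
observed actions of the players other than `i` and `j` at the common relevant
information sets. -/
def TPE (owner : H → ι) (i j : ι) {Ti Tj : Type}
    (Fi : Ti → Finset H) (Fj : Tj → Finset H) (si : Ti) (sj : Tj)
    (li : List (ObsG A Fi si)) (lj : List (ObsG A Fj sj)) : Prop :=
  li.length = lj.length ∧
    ∀ (t : ℕ) (hti : t < li.length) (htj : t < lj.length) (h : H),
      owner h ≠ i → owner h ≠ j → ∀ (hmi : h ∈ Fi si) (hmj : h ∈ Fj sj),
        (li[t]'hti) ⟨h, hmi⟩ = (lj[t]'htj) ⟨h, hmj⟩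

/-- The index policy `(idxi, ri)` is more compatible with `sistar` than `(idxj, rj)` is
with `sjstar`: after histories with third-party equivalent subhistories for the pairs
`(sistar, sjstar)` and `(si', φ si')`, if `sjstar` has weakly the highest index for `j`
then `si' ≠ sistar` does not have weakly the highest index for `i`. -/
def PolicyMoreCompat (owner : H → ι) (i j : ι) {Ti Tj : Type}
    [DecidableEq Ti] [DecidableEq Tj]
    (Fi : Ti → Finset H) (Fj : Tj → Finset H) (φ : Ti ≃ Tj)
    (idxi : ∀ s : Ti, List (ObsG A Fi s) → ℝ)
    (idxj : ∀ s : Tj, List (ObsG A Fj s) → ℝ)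
    (sistar : Ti) (sjstar : Tj) : Prop :=
  ∀ (yi : HistG A Fi) (yj : HistG A Fj) (si' : Ti), si' ≠ sistar →
    TPE A owner i j Fi Fj sistar sjstar (subH A Fi yi sistar) (subH A Fj yj sjstar) →
    TPE A owner i j Fi Fj si' (φ si') (subH A Fi yi si') (subH A Fj yj (φ si')) →
    (∀ sj' : Tj, idxj sj' (subH A Fj yj sj') ≤ idxj sjstar (subH A Fj yj sjstar)) →
    ¬ (∀ si'' : Ti, idxi si'' (subH A Fi yi si'') ≤ idxi si' (subH A Fi yi si'))

/-- The deterministic history induced by running the learning rule `r` against the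
response path `𝔄` for `t` periods: the `k`-th time `s` is played, the observation is
the `k`-th entry of `𝔄` at the `s`-relevant information sets. -/
def playHist {T : Type} [DecidableEq T] (F : T → Finset H) (r : HistG A F → T)
    (𝔄 : ℕ → ∀ h, A h) : ℕ → HistG A F
  | 0 => []
  | t + 1 =>
      let y := playHist F r 𝔄 t
      (⟨r y, fun h => 𝔄 (subH A F y (r y)).length h.1⟩ : Σ s : T, ObsG A F s) :: y

end LearnDefs

section Induced

variable (owner : H → ι) (A : H → Type) [∀ h, Fintype (A h)] [∀ h, DecidableEq (A h)]

/-- The probability, under the mixed strategy profile `σ` (one independent mixed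
strategy per player role), that a freshly drawn pure strategy profile of the opponents
prescribes the actions `o` at the `s`-relevant information sets. -/
def obsProb (σ : ∀ k : ι, (∀ h : {h // owner h = k}, A h) → ℝ)
    {T : Type} (F : T → Finset H) (s : T) (o : ObsG A F s) : ℝ :=
  ∏ k : ι, ∑ sk : ∀ h : {h // owner h = k}, A h,
    (if ∀ (h : H) (hm : h ∈ F s) (hk : owner h = k), sk ⟨h, hk⟩ = o ⟨h, hm⟩
     then σ k sk else 0)

/-- The probability of a given personal history under the learning rule `r` when each
period the opponents' pure strategies are drawn i.i.d. from `σ`. -/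
def histProb (σ : ∀ k : ι, (∀ h : {h // owner h = k}, A h) → ℝ)
    {T : Type} [DecidableEq T] (F : T → Finset H) (r : HistG A F → T) :
    HistG A F → ℝ
  | [] => 1
  | e :: y =>
      (if r y = e.1 then obsProb owner A σ F e.1 e.2 else 0) *
        histProb σ F r y

/-- The (finite) set of histories of length `t` reachable under the rule `r`. -/
def Hists {T : Type} [DecidableEq T] (F : T → Finset H)
    (r : HistG A F → T) : ℕ → Finset (HistG A F)
  | 0 => {([] : HistG A F)}
  | t + 1 => (Hists F r t).biUnion fun y =>
      Finset.univ.image fun o : ObsG A F (r y) => (⟨r y, o⟩ : Σ s : T, ObsG A F s) :: y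

/-- The induced response: the discounted lifetime frequency with which an agent using
the learning rule `r` against i.i.d. opponent play drawn from `σ`, surviving each
period with probability `γ`, plays strategy `s`. -/
def inducedResp (σ : ∀ k : ι, (∀ h : {h // owner h = k}, A h) → ℝ)
    {T : Type} [Fintype T] [DecidableEq T] (F : T → Finset H) (r : HistG A F → T)
    (γ : ℝ) (s : T) : ℝ :=
  (1 - γ) * ∑' t : ℕ, γ ^ t *
    ∑ y ∈ Hists A F r t, histProb owner A σ F r y * (if r y = s then 1 else 0)

end Induced

/-!
Couple the two agents through one random response path: the `n`-th play of `s` by `i` and the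
`n`-th play of `φ s` by `j` observe the same fresh draw of a pure profile, so each agent's coupled
history has exactly the law of her history against i.i.d. opponents. Along every path, `j` has
played `φ sᵢ*` at most as often as `i` has played `sᵢ*`, at every date: otherwise, by pigeonhole,
`i` is ahead of `j` on some `s ≠ sᵢ*`, and a discrete fixed point of the two agents' count
staircases yields histories with third-party equivalent subhistories in which `j` plays `φ sᵢ*`
(so `φ sᵢ*` has the highest index) while `i` plays `s`, against compatibility. Summation by parts
turns the comparison of counts into the comparison of discounted frequencies.
-/

def IsCounter (f : ℕ → ℕ) : Prop :=
  f 0 = 0 ∧ ∀ t, f (t + 1) = f t ∨ f (t + 1) = f t + 1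

/-- `0` if `f` never moves from `k` to `k + 1`. -/
def stepTime (f : ℕ → ℕ) (k : ℕ) : ℕ :=
  sInf {u | f u = k ∧ f (u + 1) = f u + 1}

namespace IsCounter

variable {f : ℕ → ℕ}

theorem monotone (hf : IsCounter f) : Monotone f :=
  monotone_nat_of_le_succ fun t => by rcases hf.2 t with h | h <;> omega

theorem exists_step (hf : IsCounter f) {k T : ℕ} (hk : k < f T) :
    ∃ u < T, f u = k ∧ f (u + 1) = f u + 1 := by
  induction T with
  | zero => have := hf.1; omega
  | succ T ih =>
    by_cases hkT : k < f T
    · obtain ⟨u, hu, hfu⟩ := ih hkT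
      exact ⟨u, by omega, hfu⟩
    · rcases hf.2 T with h | h
      · omega
      · exact ⟨T, by omega, by omega, h⟩

theorem stepTime_spec (hf : IsCounter f) {k T : ℕ} (hk : k < f T) :
    stepTime f k < T ∧ f (stepTime f k) = k ∧ f (stepTime f k + 1) = f (stepTime f k) + 1 := by
  obtain ⟨u, hu, hfu⟩ := hf.exists_step hk
  have hmem : stepTime f k ∈ {u | f u = k ∧ f (u + 1) = f u + 1} := Nat.sInf_mem ⟨u, hfu⟩
  exact ⟨(Nat.sInf_le hfu).trans_lt hu, hmem⟩

theorem le_of_step_le (hf : IsCounter f) {u v : ℕ} (hv : f (v + 1) = f v + 1)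
    (hle : f u ≤ f v) : u ≤ v := by
  by_contra! hvu
  have := hf.monotone (show v + 1 ≤ u by omega)
  omega

theorem stepTime_mono (hf : IsCounter f) {k k' T : ℕ} (hkk' : k ≤ k') (hk' : k' < f T) :
    stepTime f k ≤ stepTime f k' := by
  have h := hf.stepTime_spec (hkk'.trans_lt hk')
  have h' := hf.stepTime_spec hk'
  exact hf.le_of_step_le h'.2.2 (by omega)

end IsCounter

theorem exists_isFixedPt_of_monotoneOn_Iic {f : ℕ → ℕ} {N : ℕ}
    (hf : MonotoneOn f (Set.Iic N)) (hN : f N ≤ N) : ∃ n ≤ N, Function.IsFixedPt f n := by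
  have hex : ∃ n, n ≤ N ∧ f n ≤ n := ⟨N, le_rfl, hN⟩
  obtain ⟨hnN, hfn⟩ := Nat.find_spec hex
  refine ⟨Nat.find hex, hnN, le_antisymm hfn ?_⟩
  rcases Nat.eq_zero_or_pos (Nat.find hex) with h0 | hpos
  · omega
  · have hprev := Nat.find_min hex (Nat.sub_lt hpos one_pos)
    have hmono : f (Nat.find hex - 1) ≤ f (Nat.find hex) :=
      hf (Set.mem_Iic.2 (by omega)) (Set.mem_Iic.2 hnN) (Nat.sub_le _ _)
    omega

theorem exists_common_step {a b c d : ℕ → ℕ} (ha : Monotone a) (hb : IsCounter b)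
    (hc : IsCounter c) (hd : Monotone d) {T T' : ℕ} (hac : a T < c T') (hdb : d T' < b T) :
    ∃ u v, b (u + 1) = b u + 1 ∧ c (v + 1) = c v + 1 ∧ a u = c v ∧ b u = d v := by
  -- `g n` is the value of `d` when `c` steps from the value of `a` at the time `b` steps
  -- from `n`; a fixed point of `g` gives the required pair of times.
  let g : ℕ → ℕ := fun n => d (stepTime c (a (stepTime b n)))
  have hbT : ∀ n < b T, stepTime b n < T ∧ a (stepTime b n) < c T' := fun n hn =>
    ⟨(hb.stepTime_spec hn).1, (ha (hb.stepTime_spec hn).1.le).trans_lt hac⟩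
  have hg : MonotoneOn g (Set.Iic (b T - 1)) := by
    intro n hn n' hn' hnn'
    simp only [Set.mem_Iic] at hn hn'
    have hn'T := hbT n' (by omega)
    exact hd (hc.stepTime_mono (ha (hb.stepTime_mono (T := T) hnn' (by omega))) hn'T.2)
  have hgN : g (b T - 1) ≤ b T - 1 := by
    have := hd (hc.stepTime_spec (hbT (b T - 1) (by omega)).2).1.le
    simp only [g]
    omega
  obtain ⟨n, hn, hgn⟩ := exists_isFixedPt_of_monotoneOn_Iic hg hgN
  have hbn := hb.stepTime_spec (show n < b T by omega)
  have hcn := hc.stepTime_spec (hbT n (by omega)).2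
  exact ⟨stepTime b n, stepTime c (a (stepTime b n)), hbn.2.2, hcn.2.2, hcn.2.1.symm,
    hbn.2.1.trans (Function.IsFixedPt.eq hgn).symm⟩

theorem exists_ne_lt_of_sum_eq {α : Type*} [Fintype α] {f g : α → ℕ}
    (hsum : ∑ x, f x = ∑ x, g x) {a : α} (ha : f a < g a) : ∃ b ≠ a, g b < f b := by
  by_contra! h
  have : ∑ x, f x < ∑ x, g x :=
    Finset.sum_lt_sum (fun x _ => if hx : x = a then hx ▸ ha.le else h x hx)
      ⟨a, Finset.mem_univ a, ha⟩
  omega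

theorem sum_range_mul_nonneg_of_antitone {g c : ℕ → ℝ} (hg : Antitone g)
    (hg0 : ∀ t, 0 ≤ g t) (hc : ∀ n, 0 ≤ ∑ t ∈ Finset.range n, c t) (n : ℕ) :
    0 ≤ ∑ t ∈ Finset.range n, g t * c t := by
  have := Finset.sum_range_by_parts g c n
  simp only [smul_eq_mul] at this
  rw [this, sub_eq_add_neg, ← Finset.sum_neg_distrib]
  refine add_nonneg (mul_nonneg (hg0 _) (hc n)) (Finset.sum_nonneg fun t _ => ?_)
  rw [← neg_mul]
  exact mul_nonneg (by linarith [hg (Nat.le_succ t)]) (hc _)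

theorem tsum_le_tsum_of_sum_range_le {f g : ℕ → ℝ} (hf : ∀ n, 0 ≤ f n)
    (hg : ∀ n, 0 ≤ g n) (hgs : Summable g)
    (h : ∀ n, ∑ t ∈ Finset.range n, f t ≤ ∑ t ∈ Finset.range n, g t) :
    ∑' t, f t ≤ ∑' t, g t :=
  Real.tsum_le_of_sum_range_le hf fun n => (h n).trans (hgs.sum_le_tsum _ fun t _ => hg t)

section FreshCoordinate

variable {I β : Type*} [Fintype I] [DecidableEq I] {v : β → ℝ}

theorem sum_prod_apply_eq_one [Fintype β] (hv : ∑ b, v b = 1) :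
    ∑ x : I → β, ∏ q, v (x q) = 1 := by
  rw [← Fintype.prod_sum fun _ b => v b]
  simp [hv]

theorem prod_update_mul (x : I → β) (q : I) (b : β) :
    (∏ k, v (Function.update x q b k)) * v (x q) = (∏ k, v (x k)) * v b := by
  rw [Fintype.prod_eq_mul_prod_compl q, Fintype.prod_eq_mul_prod_compl q fun k => v (x k)]
  simp only [Function.update_self]
  rw [Finset.prod_congr rfl fun k hk => by
    rw [Function.update_of_ne (Finset.mem_compl.1 hk ∘ Finset.mem_singleton.2)]]
  ring

/-- Under a product weight, a coordinate `e x` chosen without looking at it carries a fresh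
draw from `v`. -/
theorem sum_prod_mul_apply_fresh [Fintype β] (hv : ∑ b, v b = 1) (e : (I → β) → I)
    (Φ : (I → β) → β → ℝ)
    (he : ∀ x b, e (Function.update x (e x) b) = e x)
    (hΦ : ∀ x b, Φ (Function.update x (e x) b) = Φ x) :
    ∑ x, (∏ q, v (x q)) * Φ x (x (e x)) = ∑ x, (∏ q, v (x q)) * ∑ b, v b * Φ x b := by
  -- `τ` swaps the value at the chosen coordinate with the fresh draw.
  let τ : (I → β) × β → (I → β) × β :=
    fun z => (Function.update z.1 (e z.1) z.2, z.1 (e z.1))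
  have hτ : Function.Involutive τ := fun ⟨x, b⟩ => by simp [τ, he]
  calc ∑ x, (∏ q, v (x q)) * Φ x (x (e x))
      = ∑ z : (I → β) × β, (∏ q, v (z.1 q)) * v z.2 * Φ z.1 (z.1 (e z.1)) := by
        simp only [Fintype.sum_prod_type, ← Finset.sum_mul, ← Finset.mul_sum, hv, mul_one]
    _ = ∑ z : (I → β) × β,
          (∏ q, v ((τ z).1 q)) * v (τ z).2 * Φ (τ z).1 ((τ z).1 (e (τ z).1)) :=
        (Equiv.sum_comp hτ.toPerm _).symm
    _ = ∑ x, (∏ q, v (x q)) * ∑ b, v b * Φ x b := by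
        simp only [τ, he, hΦ, prod_update_mul, Function.update_self, Fintype.sum_prod_type,
          Finset.mul_sum, mul_assoc]

end FreshCoordinate

section PathPlay

omit [Fintype H] [DecidableEq H]

variable {A : H → Type} {S C : Type} [DecidableEq S] {F : S → Finset H}

theorem subH_cons_self (y : HistG A F) (s : S) (o : ObsG A F s) :
    subH A F ((⟨s, o⟩ : Σ s : S, ObsG A F s) :: y) s = o :: subH A F y s := by
  simp [subH]

theorem subH_cons_of_ne (y : HistG A F) {s₀ s : S} (o : ObsG A F s₀) (h : s₀ ≠ s) :
    subH A F ((⟨s₀, o⟩ : Σ s : S, ObsG A F s) :: y) s = subH A F y s := by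
  simp [subH, h]

theorem length_subH_cons (y : HistG A F) (e : Σ s : S, ObsG A F s) (s : S) :
    (subH A F (e :: y) s).length = (subH A F y s).length + if e.1 = s then 1 else 0 := by
  obtain ⟨s₀, o⟩ := e
  by_cases h : s₀ = s
  · subst h
    simp [subH_cons_self]
  · simp [subH_cons_of_ne y o h, h]

theorem sum_length_subH [Fintype S] (y : HistG A F) :
    ∑ s : S, (subH A F y s).length = y.length := by
  induction y with
  | nil => simp [subH]
  | cons e y ih => simp [length_subH_cons, Finset.sum_add_distrib, ih]

variable (A F) (r : HistG A F → S)

/-- The history of an agent using the rule `r` against the response path `p`: the `n`-th time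
she plays `s`, she observes `p n (ψ s)` at the `s`-relevant information sets. -/
def pathHist (ψ : S → C) (p : ℕ → C → ∀ h, A h) : ℕ → HistG A F
  | 0 => []
  | t + 1 =>
      let y := pathHist ψ p t
      (⟨r y, fun h => p (subH A F y (r y)).length (ψ (r y)) h.1⟩ : Σ s : S, ObsG A F s) :: y

def playCount (ψ : S → C) (p : ℕ → C → ∀ h, A h) (s : S) (t : ℕ) : ℕ :=
  (subH A F (pathHist A F r ψ p t) s).length

variable {A F r} {ψ : S → C} {p : ℕ → C → ∀ h, A h}

theorem length_pathHist (t : ℕ) : (pathHist A F r ψ p t).length = t := by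
  induction t with
  | zero => rfl
  | succ t ih => simp [pathHist, ih]

theorem playCount_succ (s : S) (t : ℕ) :
    playCount A F r ψ p s (t + 1) =
      playCount A F r ψ p s t + if r (pathHist A F r ψ p t) = s then 1 else 0 :=
  length_subH_cons _ _ s

theorem isCounter_playCount (s : S) : IsCounter (playCount A F r ψ p s) :=
  ⟨rfl, fun t => by rw [playCount_succ]; split_ifs <;> simp⟩

theorem playCount_succ_eq_add_one_iff {s : S} {t : ℕ} :
    playCount A F r ψ p s (t + 1) = playCount A F r ψ p s t + 1 ↔
      r (pathHist A F r ψ p t) = s := by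
  rw [playCount_succ]
  split_ifs with h <;> simp [h]

theorem sum_playCount [Fintype S] (t : ℕ) : ∑ s, playCount A F r ψ p s t = t := by
  simp only [playCount, sum_length_subH, length_pathHist]

theorem sum_range_indicator_eq_playCount (s : S) (T : ℕ) :
    ∑ t ∈ Finset.range T, (if r (pathHist A F r ψ p t) = s then 1 else 0 : ℝ) =
      playCount A F r ψ p s T := by
  have := Finset.sum_range_sub (fun t => (playCount A F r ψ p s t : ℝ)) T
  simp only [playCount_succ, Nat.cast_add, Nat.cast_ite, Nat.cast_one, Nat.cast_zero,
    add_sub_cancel_left] at this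
  rw [this, show playCount A F r ψ p s 0 = 0 from rfl, Nat.cast_zero, sub_zero]

theorem subH_pathHist (s : S) (t : ℕ) :
    subH A F (pathHist A F r ψ p t) s =
      (List.range (playCount A F r ψ p s t)).reverse.map
        fun n => (fun h => p n (ψ s) h.1 : ObsG A F s) := by
  induction t with
  | zero => rfl
  | succ t ih =>
    by_cases h : r (pathHist A F r ψ p t) = s
    · have hcount := playCount_succ_eq_add_one_iff.2 h
      rw [hcount, List.range_succ, List.reverse_append, List.map_append, ← ih]
      subst h
      exact subH_cons_self _ _ _
    · rw [playCount_succ, if_neg h, add_zero, ← ih]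
      exact subH_cons_of_ne _ _ h

theorem playCount_le (s : S) (t : ℕ) : playCount A F r ψ p s t ≤ t :=
  (List.length_filterMap_le _ _).trans (length_pathHist t).le

theorem pathHist_congr {p p' : ℕ → C → ∀ h, A h} {t : ℕ}
    (hpp' : ∀ s, ∀ n < playCount A F r ψ p s t, p n (ψ s) = p' n (ψ s)) :
    pathHist A F r ψ p t = pathHist A F r ψ p' t := by
  induction t with
  | zero => rfl
  | succ t ih =>
    have hY := ih fun s n hn =>
      hpp' s n (hn.trans_le ((isCounter_playCount s).monotone t.le_succ))
    have hnew := hpp' (r (pathHist A F r ψ p t))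
      (playCount A F r ψ p (r (pathHist A F r ψ p t)) t)
      (by rw [playCount_succ, if_pos rfl]; omega)
    unfold playCount at hnew
    simp only [pathHist]
    rw [← hY, hnew]

end PathPlay

section Pathwise

omit [Fintype ι] [DecidableEq ι] [Fintype H] [DecidableEq H]

variable {A : H → Type} (owner : H → ι) (i j : ι) {Ti Tj : Type}
  {Fi : Ti → Finset H} {Fj : Tj → Finset H}

theorem tpe_map {α : Type*} {si : Ti} {sj : Tj} (L : List α) (gi : α → ObsG A Fi si)
    (gj : α → ObsG A Fj sj) (hg : ∀ a h hmi hmj, gi a ⟨h, hmi⟩ = gj a ⟨h, hmj⟩) :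
    TPE A owner i j Fi Fj si sj (L.map gi) (L.map gj) :=
  ⟨by simp, fun _ _ _ h _ _ hmi hmj => by simpa only [List.getElem_map] using hg _ h hmi hmj⟩

variable [DecidableEq Ti] [DecidableEq Tj] {φ : Ti ≃ Tj} {ri : HistG A Fi → Ti}
  {rj : HistG A Fj → Tj}

theorem tpe_subH_pathHist (p : ℕ → Ti → ∀ h, A h) {s : Ti} {u v : ℕ}
    (hcount : playCount A Fi ri id p s u = playCount A Fj rj φ.symm p (φ s) v) :
    TPE A owner i j Fi Fj s (φ s) (subH A Fi (pathHist A Fi ri id p u) s)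
      (subH A Fj (pathHist A Fj rj φ.symm p v) (φ s)) := by
  rw [subH_pathHist, subH_pathHist, ← hcount]
  exact tpe_map owner i j _ _ _ fun n h _ _ => by simp

theorem playCount_le_of_policyMoreCompat [Fintype Ti] [Fintype Tj]
    {idxi : ∀ s, List (ObsG A Fi s) → ℝ} {idxj : ∀ s, List (ObsG A Fj s) → ℝ}
    (hri : IsIndexPolicy A Fi idxi ri)
    (hrj : IsIndexPolicy A Fj idxj rj) {sistar : Ti}
    (hcompat : PolicyMoreCompat A owner i j Fi Fj φ idxi idxj sistar (φ sistar))
    (p : ℕ → Ti → ∀ h, A h) (T : ℕ) :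
    playCount A Fj rj φ.symm p (φ sistar) T ≤ playCount A Fi ri id p sistar T := by
  by_contra! hlt
  have hsum : ∑ s, playCount A Fi ri id p s T = ∑ s, playCount A Fj rj φ.symm p (φ s) T := by
    rw [sum_playCount, Equiv.sum_comp φ (fun s => playCount A Fj rj φ.symm p s T),
      sum_playCount]
  obtain ⟨s, hs, hlt'⟩ := exists_ne_lt_of_sum_eq hsum hlt
  obtain ⟨u, v, hu, hv, hstar, hcount⟩ := exists_common_step
    (isCounter_playCount sistar).monotone (isCounter_playCount s)
    (isCounter_playCount (φ sistar)) (isCounter_playCount (φ s)).monotone hlt hlt'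
  rw [playCount_succ_eq_add_one_iff] at hu hv
  refine hcompat _ _ s hs (tpe_subH_pathHist owner i j p hstar)
    (tpe_subH_pathHist owner i j p hcount) (fun sj => ?_) (fun si => ?_)
  · rw [← hv]
    exact hrj _ sj
  · rw [← hu]
    exact hri _ si

theorem sum_range_discount_le_of_policyMoreCompat [Fintype Ti] [Fintype Tj]
    {idxi : ∀ s, List (ObsG A Fi s) → ℝ} {idxj : ∀ s, List (ObsG A Fj s) → ℝ}
    (hri : IsIndexPolicy A Fi idxi ri) (hrj : IsIndexPolicy A Fj idxj rj) {sistar : Ti}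
    (hcompat : PolicyMoreCompat A owner i j Fi Fj φ idxi idxj sistar (φ sistar))
    {γ : ℝ} (hγ0 : 0 ≤ γ) (hγ1 : γ ≤ 1) (p : ℕ → Ti → ∀ h, A h) (T : ℕ) :
    ∑ t ∈ Finset.range T,
        γ ^ t * (if rj (pathHist A Fj rj φ.symm p t) = φ sistar then 1 else 0) ≤
      ∑ t ∈ Finset.range T,
        γ ^ t * (if ri (pathHist A Fi ri id p t) = sistar then 1 else 0) := by
  have key := sum_range_mul_nonneg_of_antitone (g := (γ ^ ·))
    (c := fun t => (if ri (pathHist A Fi ri id p t) = sistar then 1 else 0) -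
      if rj (pathHist A Fj rj φ.symm p t) = φ sistar then 1 else 0)
    (fun _ _ hmn => pow_le_pow_of_le_one hγ0 hγ1 hmn) (fun t => pow_nonneg hγ0 t)
    (fun n => by
      rw [Finset.sum_sub_distrib, sum_range_indicator_eq_playCount,
        sum_range_indicator_eq_playCount, sub_nonneg]
      exact_mod_cast playCount_le_of_policyMoreCompat owner i j hri hrj hcompat p n) T
  simpa only [mul_sub, Finset.sum_sub_distrib, sub_nonneg] using key

end Pathwise

section Profiles

variable (owner : H → ι) (A : H → Type)

abbrev PureProfile : Type := ∀ k : ι, ∀ h : {h // owner h = k}, A h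

variable {owner A}

def PureProfile.actions (b : PureProfile owner A) : ∀ h, A h := fun h => b (owner h) ⟨h, rfl⟩

def profileWeight (σ : ∀ k : ι, (∀ h : {h // owner h = k}, A h) → ℝ)
    (b : PureProfile owner A) : ℝ :=
  ∏ k, σ k (b k)

variable {σ : ∀ k : ι, (∀ h : {h // owner h = k}, A h) → ℝ}

omit [DecidableEq ι] [Fintype H] [DecidableEq H] in
theorem profileWeight_nonneg (hσ : ∀ k sk, 0 ≤ σ k sk) (b : PureProfile owner A) :
    0 ≤ profileWeight σ b :=
  Finset.prod_nonneg fun k _ => hσ k (b k)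

variable [∀ h, Fintype (A h)]

theorem sum_profileWeight (hσ : ∀ k, ∑ sk, σ k sk = 1) :
    ∑ b : PureProfile owner A, profileWeight σ b = 1 := by
  simp only [profileWeight, ← Fintype.prod_sum, hσ, Finset.prod_const_one]

omit [Fintype ι] in
theorem nonempty_pureProfile (hσ : ∀ k, ∑ sk, σ k sk = 1) :
    Nonempty (PureProfile owner A) := by
  have (k : ι) : Nonempty (∀ h : {h // owner h = k}, A h) := by
    obtain ⟨sk, -, -⟩ := Finset.exists_ne_zero_of_sum_ne_zero (hσ k ▸ one_ne_zero)
    exact ⟨sk⟩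
  infer_instance

variable [∀ h, DecidableEq (A h)]

theorem obsProb_eq_sum {T : Type} (F : T → Finset H) (s : T) (o : ObsG A F s) :
    obsProb owner A σ F s o = ∑ b : PureProfile owner A,
      if (fun h => b.actions h.1 : ObsG A F s) = o then profileWeight σ b else 0 := by
  rw [obsProb, Fintype.prod_sum]
  refine Finset.sum_congr rfl fun b _ => ?_
  rw [Fintype.prod_ite_zero, profileWeight]
  congr 1
  refine propext ⟨fun hb => funext fun h => hb _ h.1 h.2 rfl, ?_⟩
  rintro hb k h hm rfl
  exact congrFun hb ⟨h, hm⟩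

theorem sum_profileWeight_mul_obs {T : Type} (F : T → Finset H) (s : T) (G : ObsG A F s → ℝ) :
    ∑ b : PureProfile owner A, profileWeight σ b * G (fun h => b.actions h.1) =
      ∑ o, obsProb owner A σ F s o * G o := by
  simp only [obsProb_eq_sum, Finset.sum_mul, ite_mul, zero_mul]
  rw [Finset.sum_comm]
  simp

end Profiles

section Histories

variable {A : H → Type} [∀ h, Fintype (A h)] [∀ h, DecidableEq (A h)] {S : Type}
  [DecidableEq S] {F : S → Finset H} {r : HistG A F → S}

omit [Fintype H] in
theorem sum_Hists_succ (f : HistG A F → ℝ) (t : ℕ) :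
    ∑ y ∈ Hists A F r (t + 1), f y =
      ∑ y ∈ Hists A F r t,
        ∑ o : ObsG A F (r y), f ((⟨r y, o⟩ : Σ s : S, ObsG A F s) :: y) := by
  rw [Hists, Finset.sum_biUnion]
  · refine Finset.sum_congr rfl fun y _ => Finset.sum_image fun o _ o' _ h => ?_
    simpa using h
  · intro y _ y' _ hne
    simp only [Function.onFun, Finset.disjoint_left, Finset.mem_image]
    rintro _ ⟨o, -, rfl⟩ ⟨o', -, h⟩
    exact hne (List.cons.inj h).2.symm

theorem histProb_cons (owner : H → ι)
    (σ : ∀ k : ι, (∀ h : {h // owner h = k}, A h) → ℝ)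
    (y : HistG A F) (o : ObsG A F (r y)) :
    histProb owner A σ F r ((⟨r y, o⟩ : Σ s : S, ObsG A F s) :: y) =
      obsProb owner A σ F (r y) o * histProb owner A σ F r y := by
  simp [histProb]

end Histories

section ExtendPath

omit [Fintype ι] [DecidableEq ι] [Fintype H] [DecidableEq H]

variable (owner : H → ι) {A : H → Type} {C : Type} {T : ℕ}

/-- A response path of pure profiles indexed by (count, strategy) pairs below the horizon `T`,
continued by the constant profile `b₀`. -/
def extendPath (b₀ : PureProfile owner A) (x : Fin T × C → PureProfile owner A) :
    ℕ → C → ∀ h, A h :=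
  fun n c => if hn : n < T then (x (⟨n, hn⟩, c)).actions else b₀.actions

variable {owner} {S : Type} [DecidableEq S] {F : S → Finset H} {r : HistG A F → S}
  {ψ : S → C}

theorem pathHist_extendPath_update [DecidableEq C] (b₀ : PureProfile owner A)
    {x : Fin T × C → PureProfile owner A} {q : Fin T × C} {t : ℕ}
    (hq : ∀ s, ψ s = q.2 → playCount A F r ψ (extendPath owner b₀ x) s t ≤ q.1)
    (b : PureProfile owner A) :
    pathHist A F r ψ (extendPath owner b₀ (Function.update x q b)) t =
      pathHist A F r ψ (extendPath owner b₀ x) t := by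
  refine (pathHist_congr fun s n hn => ?_).symm
  unfold extendPath
  split_ifs with hnT
  · rw [Function.update_of_ne]
    rintro rfl
    exact absurd (hq s rfl) (not_le.2 hn)
  · rfl

end ExtendPath

section Coupling

variable {owner : H → ι} {A : H → Type} [∀ h, Fintype (A h)] [∀ h, DecidableEq (A h)]
  {S C : Type} [DecidableEq S] {F : S → Finset H} {r : HistG A F → S} {ψ : S → C} {T : ℕ}
  {σ : ∀ k : ι, (∀ h : {h // owner h = k}, A h) → ℝ}

theorem sum_extendPath_eq_sum_Hists [Fintype C] [DecidableEq C] (hσ : ∀ k, ∑ sk, σ k sk = 1)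
    (hψ : ψ.Injective) (b₀ : PureProfile owner A) {t : ℕ} (htT : t ≤ T)
    (G : HistG A F → ℝ) :
    ∑ x : Fin T × C → PureProfile owner A,
        (∏ q, profileWeight σ (x q)) * G (pathHist A F r ψ (extendPath owner b₀ x) t) =
      ∑ y ∈ Hists A F r t, histProb owner A σ F r y * G y := by
  induction t generalizing G with
  | zero =>
    simp [pathHist, Hists, histProb, ← Finset.sum_mul,
      sum_prod_apply_eq_one (sum_profileWeight hσ)]
  | succ t ih =>
    let Y (x : Fin T × C → PureProfile owner A) : HistG A F :=
      pathHist A F r ψ (extendPath owner b₀ x) t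
    have hlt (x) : (subH A F (Y x) (r (Y x))).length < T := (playCount_le _ t).trans_lt htT
    -- the coordinate of the path read in period `t`
    let e (x : Fin T × C → PureProfile owner A) : Fin T × C := (⟨_, hlt x⟩, ψ (r (Y x)))
    let Φ (x : Fin T × C → PureProfile owner A) (b : PureProfile owner A) : ℝ :=
      G (⟨r (Y x), fun h => b.actions h.1⟩ :: Y x)
    have hY (x b) : Y (Function.update x (e x) b) = Y x :=
      pathHist_extendPath_update b₀ (fun s hs => (hψ hs).symm ▸ le_rfl) b
    have he (x b) : e (Function.update x (e x) b) = e x := by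
      generalize hx' : Function.update x (e x) b = x' at hY
      have hx'Y : Y x' = Y x := hx' ▸ hY x b
      exact Prod.ext (Fin.ext (by simp only [e]; rw [hx'Y])) (by simp only [e, hx'Y])
    have hΦ (x b) : Φ (Function.update x (e x) b) = Φ x := by
      funext b'
      simp only [Φ]
      rw [hY]
    have hstep (x) : G (pathHist A F r ψ (extendPath owner b₀ x) (t + 1)) = Φ x (x (e x)) := by
      simp only [Φ, pathHist, extendPath]
      rw [dif_pos (hlt x)]
    let G' (y : HistG A F) : ℝ :=
      ∑ o, obsProb owner A σ F (r y) o * G ((⟨r y, o⟩ : Σ s : S, ObsG A F s) :: y)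
    calc ∑ x, (∏ q, profileWeight σ (x q)) *
          G (pathHist A F r ψ (extendPath owner b₀ x) (t + 1))
        = ∑ x, (∏ q, profileWeight σ (x q)) * Φ x (x (e x)) := by simp only [hstep]
      _ = ∑ x, (∏ q, profileWeight σ (x q)) * ∑ b, profileWeight σ b * Φ x b :=
          sum_prod_mul_apply_fresh (sum_profileWeight hσ) e Φ he hΦ
      _ = ∑ x, (∏ q, profileWeight σ (x q)) * G' (Y x) := by
          refine Finset.sum_congr rfl fun x _ => congrArg _ ?_
          exact sum_profileWeight_mul_obs F (r (Y x)) fun o => G (⟨r (Y x), o⟩ :: Y x)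
      _ = ∑ y ∈ Hists A F r t, histProb owner A σ F r y * G' y := ih (Nat.le_of_succ_le htT) G'
      _ = ∑ y ∈ Hists A F r (t + 1), histProb owner A σ F r y * G y := by
          simp only [G', sum_Hists_succ, histProb_cons, Finset.mul_sum, mul_assoc, mul_left_comm]

end Coupling

section PlayProb

variable (owner : H → ι) (A : H → Type) [∀ h, Fintype (A h)] [∀ h, DecidableEq (A h)]
  (σ : ∀ k : ι, (∀ h : {h // owner h = k}, A h) → ℝ) {S : Type} [DecidableEq S]
  (F : S → Finset H) (r : HistG A F → S)

/-- `P{X^t = s}` for an agent using `r` against i.i.d. draws from `σ`. -/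
def playProb (s : S) (t : ℕ) : ℝ :=
  ∑ y ∈ Hists A F r t, histProb owner A σ F r y * if r y = s then 1 else 0

variable {owner A σ F r} {C : Type} [Fintype C] [DecidableEq C] {ψ : S → C}

theorem playProb_eq_sum_extendPath (hσ : ∀ k, ∑ sk, σ k sk = 1) (hψ : ψ.Injective)
    (b₀ : PureProfile owner A) (s : S) {t T : ℕ} (htT : t ≤ T) :
    playProb owner A σ F r s t = ∑ x : Fin T × C → PureProfile owner A,
      (∏ q, profileWeight σ (x q)) *
        if r (pathHist A F r ψ (extendPath owner b₀ x) t) = s then 1 else 0 :=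
  (sum_extendPath_eq_sum_Hists hσ hψ b₀ htT fun y => if r y = s then 1 else 0).symm

theorem sum_range_pow_mul_playProb (hσ : ∀ k, ∑ sk, σ k sk = 1) (hψ : ψ.Injective)
    (b₀ : PureProfile owner A) (s : S) (γ : ℝ) (T : ℕ) :
    ∑ t ∈ Finset.range T, γ ^ t * playProb owner A σ F r s t =
      ∑ x : Fin T × C → PureProfile owner A, (∏ q, profileWeight σ (x q)) *
        ∑ t ∈ Finset.range T,
          γ ^ t * if r (pathHist A F r ψ (extendPath owner b₀ x) t) = s then 1 else 0 := by
  simp only [Finset.mul_sum]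
  rw [Finset.sum_comm]
  refine Finset.sum_congr rfl fun t ht => ?_
  rw [playProb_eq_sum_extendPath hσ hψ b₀ s (Finset.mem_range.1 ht).le, Finset.mul_sum]
  exact Finset.sum_congr rfl fun x _ => by ring

theorem playProb_mem_Icc [Fintype S] (hσ0 : ∀ k sk, 0 ≤ σ k sk)
    (hσ : ∀ k, ∑ sk, σ k sk = 1) (s : S) (t : ℕ) : playProb owner A σ F r s t ∈ Set.Icc 0 1 := by
  obtain ⟨b₀⟩ := nonempty_pureProfile hσ
  rw [playProb_eq_sum_extendPath (C := S) hσ Function.injective_id b₀ s le_rfl]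
  have hw (x : Fin t × S → PureProfile owner A) : 0 ≤ ∏ q, profileWeight σ (x q) :=
    Finset.prod_nonneg fun q _ => profileWeight_nonneg hσ0 (x q)
  refine ⟨Finset.sum_nonneg fun x _ => mul_nonneg (hw x) (by split_ifs <;> norm_num), ?_⟩
  calc _ ≤ ∑ x : Fin t × S → PureProfile owner A, ∏ q, profileWeight σ (x q) :=
        Finset.sum_le_sum fun x _ => mul_le_of_le_one_right (hw x) (by split_ifs <;> norm_num)
    _ = 1 := sum_prod_apply_eq_one (sum_profileWeight hσ)

end PlayProb

theorem induced_response_respects_compatibility_general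
    (owner : H → ι) (A : H → Type) [∀ h, Fintype (A h)] [∀ h, DecidableEq (A h)]
    (i j : ι)
    (Fi : (∀ h : {h // owner h = i}, A h) → Finset H)
    (Fj : (∀ h : {h // owner h = j}, A h) → Finset H)
    (φ : (∀ h : {h // owner h = i}, A h) ≃ (∀ h : {h // owner h = j}, A h))
    (sistar : ∀ h : {h // owner h = i}, A h) (sjstar : ∀ h : {h // owner h = j}, A h)
    (hφstar : φ sistar = sjstar)
    (idxi : ∀ s, List (ObsG A Fi s) → ℝ) (ri : HistG A Fi → _)
    (hri : IsIndexPolicy A Fi idxi ri)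
    (idxj : ∀ s, List (ObsG A Fj s) → ℝ) (rj : HistG A Fj → _)
    (hrj : IsIndexPolicy A Fj idxj rj)
    (hcompat : PolicyMoreCompat A owner i j Fi Fj φ idxi idxj sistar sjstar)
    -- the common learning environment: a mixed strategy profile
    (σ : ∀ k : ι, (∀ h : {h // owner h = k}, A h) → ℝ)
    (hσ : ∀ k, (∀ sk, 0 ≤ σ k sk) ∧ ∑ sk, σ k sk = 1)
    (γ : ℝ) (hγ0 : 0 ≤ γ) (hγ1 : γ < 1) :
    inducedResp owner A σ Fj rj γ sjstar ≤ inducedResp owner A σ Fi ri γ sistar := by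
  subst hφstar
  have hσ0 k := (hσ k).1
  have hσ1 k := (hσ k).2
  obtain ⟨b₀⟩ := nonempty_pureProfile hσ1
  have hPi t := playProb_mem_Icc (F := Fi) (r := ri) hσ0 hσ1 sistar t
  have hPj t := playProb_mem_Icc (F := Fj) (r := rj) hσ0 hσ1 (φ sistar) t
  -- couple both agents to one response path, on which `i` plays `sistar` at least as often
  have hpartial (T : ℕ) :
      ∑ t ∈ Finset.range T, γ ^ t * playProb owner A σ Fj rj (φ sistar) t ≤
        ∑ t ∈ Finset.range T, γ ^ t * playProb owner A σ Fi ri sistar t := by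
    rw [sum_range_pow_mul_playProb hσ1 φ.symm.injective b₀,
      sum_range_pow_mul_playProb hσ1 Function.injective_id b₀]
    exact Finset.sum_le_sum fun x _ => mul_le_mul_of_nonneg_left
      (sum_range_discount_le_of_policyMoreCompat owner i j hri hrj hcompat hγ0 hγ1.le _ T)
      (Finset.prod_nonneg fun q _ => profileWeight_nonneg hσ0 (x q))
  refine mul_le_mul_of_nonneg_left (tsum_le_tsum_of_sum_range_le
    (fun t => mul_nonneg (pow_nonneg hγ0 t) (hPj t).1)
    (fun t => mul_nonneg (pow_nonneg hγ0 t) (hPi t).1)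
    ((summable_geometric_of_lt_one hγ0 hγ1).of_nonneg_of_le
      (fun t => mul_nonneg (pow_nonneg hγ0 t) (hPi t).1)
      (fun t => mul_le_of_le_one_right (pow_nonneg hγ0 t) (hPi t).2))
    hpartial) (by linarith)

/-- Proposition: if the index policy `r_i` is more compatible with `s_i*` than `r_j` is
with `s_j*` (under isomorphic factoring with `φ s_i* = s_j*`), then for any survival
probability `0 ≤ γ < 1` and any mixed strategy profile `σ`, the induced responses
satisfy `φ_i(s_i*; r_i, σ₋ᵢ) ≥ φ_j(s_j*; r_j, σ₋ⱼ)`. -/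
theorem induced_response_respects_compatibility
    (owner : H → ι) (A : H → Type) [∀ h, Fintype (A h)] [∀ h, DecidableEq (A h)]
    (payoff : ι → (∀ h, A h) → ℝ)
    (i j : ι) (hij : i ≠ j)
    (Fi : (∀ h : {h // owner h = i}, A h) → Finset H)
    (Fj : (∀ h : {h // owner h = j}, A h) → Finset H)
    (hFiOwner : ∀ si h, h ∈ Fi si → owner h ≠ i)
    (hFiMeas : ∀ si (so so' : ∀ h : {h // owner h ≠ i}, A h),
      payoff i (combine owner A i si so) = payoff i (combine owner A i si so') ↔
        ∀ (h : H), h ∈ Fi si → ∀ (hne : owner h ≠ i), so ⟨h, hne⟩ = so' ⟨h, hne⟩)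
    (hFiDisj : ∀ si si', si ≠ si' → Disjoint (Fi si) (Fi si'))
    (hFjOwner : ∀ sj h, h ∈ Fj sj → owner h ≠ j)
    (hFjMeas : ∀ sj (so so' : ∀ h : {h // owner h ≠ j}, A h),
      payoff j (combine owner A j sj so) = payoff j (combine owner A j sj so') ↔
        ∀ (h : H), h ∈ Fj sj → ∀ (hne : owner h ≠ j), so ⟨h, hne⟩ = so' ⟨h, hne⟩)
    (hFjDisj : ∀ sj sj', sj ≠ sj' → Disjoint (Fj sj) (Fj sj'))
    (φ : (∀ h : {h // owner h = i}, A h) ≃ (∀ h : {h // owner h = j}, A h))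
    (hiso : ∀ si (h : H), owner h ≠ i → owner h ≠ j → (h ∈ Fi si ↔ h ∈ Fj (φ si)))
    (sistar : ∀ h : {h // owner h = i}, A h) (sjstar : ∀ h : {h // owner h = j}, A h)
    (hφstar : φ sistar = sjstar)
    (idxi : ∀ s, List (ObsG A Fi s) → ℝ) (ri : HistG A Fi → _)
    (hri : IsIndexPolicy A Fi idxi ri)
    (idxj : ∀ s, List (ObsG A Fj s) → ℝ) (rj : HistG A Fj → _)
    (hrj : IsIndexPolicy A Fj idxj rj)
    (hcompat : PolicyMoreCompat A owner i j Fi Fj φ idxi idxj sistar sjstar)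
    -- the common learning environment: a mixed strategy profile
    (σ : ∀ k : ι, (∀ h : {h // owner h = k}, A h) → ℝ)
    (hσ : ∀ k, (∀ sk, 0 ≤ σ k sk) ∧ ∑ sk, σ k sk = 1)
    (γ : ℝ) (hγ0 : 0 ≤ γ) (hγ1 : γ < 1) :
    inducedResp owner A σ Fj rj γ sjstar ≤ inducedResp owner A σ Fi ri γ sistar :=
  induced_response_respects_compatibility_general owner A i j Fi Fj φ sistar sjstar hφstar idxi ri
    hri idxj rj hrj hcompat σ hσ γ hγ0 hγ1
end
end
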